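/- Let f : [0,1]^n → [0,1] be continuous and polynomially bounded, and let L = {p ∈ [0,1]^n : f(p) ≤ 3/8}. Then for every q ∈ L there exist a radius r_q > 0 and an integer t_q such that for all p ∈ L with ‖p − q‖_∞ < r_q and all integers t ≥ t_q it holds that f(p) − (1/4)·P_p[f(X̄_t) ≥ 1/2] ≥ (1/8)·f(p). -/

import Mathlib

open Finset

def cube (n : ℕ) : Set (Fin n → ℝ) := {p | ∀ i, 0 ≤ p i ∧ p i ≤ 1}

/-- The open face `F_{A,S,B}` of the hypercube, where `S` is the complement of `A ∪ B`. -/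
def face {n : ℕ} (A B : Finset (Fin n)) : Set (Fin n → ℝ) :=
  {p | (∀ i ∈ A, p i = 0) ∧ (∀ i ∈ B, p i = 1) ∧ ∀ i ∉ A ∪ B, 0 < p i ∧ p i < 1}

/-- `(1-p)^A · (p(1-p))^S · p^B` for the face `F_{A,S,B}`. -/
noncomputable def facePoly {n : ℕ} (A B : Finset (Fin n)) (p : Fin n → ℝ) : ℝ :=
  (∏ i ∈ A, (1 - p i)) * (∏ i ∈ (A ∪ B)ᶜ, p i * (1 - p i)) * (∏ i ∈ B, p i)
/-- A function `f : [0,1]^n → [0,1]` is polynomially bounded. -/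
def PolyBounded {n : ℕ} (f : (Fin n → ℝ) → ℝ) : Prop :=
  ∃ (m : ℕ) (c : ℝ), 0 < c ∧ ∀ A B : Finset (Fin n), Disjoint A B →
    (¬ ∀ q ∈ face A B, f q = 0) →
    ∀ p ∈ cube n, c * facePoly A B p ^ m ≤ f p
/-- Probability weight of a realization `x` of `t` flips of the `n` coins `p`. -/
noncomputable def flipWeight {n t : ℕ} (p : Fin n → ℝ) (x : Fin t → Fin n → Bool) : ℝ :=
  ∏ s, ∏ i, if x s i then p i else 1 - p i

/-- `P_p[E]`, the probability of the event `E` for `t` i.i.d. flips of the `n` coins `p`. -/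
noncomputable def coinProb {n : ℕ} (t : ℕ) (p : Fin n → ℝ)
    (E : Set (Fin t → Fin n → Bool)) : ℝ :=
  ∑ x : Fin t → Fin n → Bool, Set.indicator E (flipWeight p) x

/-- The empirical average `X̄_t` of the coin flips `x`. -/
noncomputable def empAvg {n : ℕ} (t : ℕ) (x : Fin t → Fin n → Bool) : Fin n → ℝ :=
  fun i => (∑ s, if x s i then (1 : ℝ) else 0) / t

/-!
Split the event `{f (X̄_t) ≥ 1/2}` according to the pattern `σ` of `X̄_t`, which records for each
coordinate whether it is `≤ β`, `≥ 1 - β` or in between; each pattern names a face of the cube.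
If `f` vanishes on that face, the piece is empty once `β` is small (continuity and compactness).
Otherwise `f p ≥ c · facePoly(p)^m`, and the probability of the pattern factorises over the
coordinates. A coordinate on the same side as `q` costs at most a constant times its factor of
`facePoly`; a coordinate on another side is a large deviation, exponentially unlikely near the
boundary and `O(1/t)` by Chebyshev in the interior, and in both cases bounded by its factor to the
power `m` divided by `t`. If every coordinate is on the side of `q`, then `X̄_t ∈ {f ≥ 1/2}` is far
from `q`, which costs `O(1/t)` by Chebyshev, while `f p` is bounded below near `q`. Altogether
`P_p[f (X̄_t) ≥ 1/2] ≤ C f(p) / t ≤ f p` for large `t`.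
-/

open Filter Topology

section Column

variable {t : ℕ}

def heads (c : Fin t → Bool) : ℕ := ∑ s, if c s then 1 else 0

noncomputable def freq (c : Fin t → Bool) : ℝ := heads c / t

noncomputable def colWeight (p : ℝ) (c : Fin t → Bool) : ℝ := ∏ s, if c s then p else 1 - p

noncomputable def colProb (p : ℝ) (D : Set (Fin t → Bool)) : ℝ :=
  ∑ c, D.indicator (colWeight p) c

lemma heads_le (c : Fin t → Bool) : heads c ≤ t := by
  calc heads c ≤ ∑ _s : Fin t, 1 := sum_le_sum fun s _ => by split <;> omega
    _ = t := by simp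

lemma freq_mem_Icc (c : Fin t → Bool) : freq c ∈ Set.Icc (0 : ℝ) 1 :=
  ⟨by unfold freq; positivity,
    div_le_one_of_le₀ (by exact_mod_cast heads_le c) (Nat.cast_nonneg t)⟩

lemma colWeight_eq (p : ℝ) (c : Fin t → Bool) :
    colWeight p c = p ^ heads c * (1 - p) ^ (t - heads c) := by
  have hcard : heads c = #(univ.filter fun s => c s = true) := by
    rw [card_filter]; rfl
  rw [colWeight, prod_ite, prod_const, prod_const, hcard, filter_not,
    card_sdiff_of_subset (filter_subset _ _), card_univ, Fintype.card_fin]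

lemma colWeight_nonneg {p : ℝ} (h0 : 0 ≤ p) (h1 : p ≤ 1) (c : Fin t → Bool) :
    0 ≤ colWeight p c :=
  prod_nonneg fun s _ => by split <;> linarith

lemma sum_colWeight_mul_prod (p : ℝ) (g : Fin t → Bool → ℝ) :
    ∑ c : Fin t → Bool, colWeight p c * ∏ s, g s (c s) =
      ∏ s, (p * g s true + (1 - p) * g s false) := by
  calc ∑ c : Fin t → Bool, colWeight p c * ∏ s, g s (c s)
      = ∑ c : Fin t → Bool, ∏ s, (if c s then p else 1 - p) * g s (c s) := by
        simp_rw [colWeight, prod_mul_distrib]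
    _ = ∏ s, ∑ b, (if b then p else 1 - p) * g s b := by rw [Fintype.prod_sum]
    _ = ∏ s, (p * g s true + (1 - p) * g s false) := by simp

lemma sum_colWeight (p : ℝ) : ∑ c : Fin t → Bool, colWeight p c = 1 := by
  simpa using sum_colWeight_mul_prod (t := t) p fun _ _ => 1

lemma sum_colWeight_mul_heads_sub_sq (p : ℝ) :
    ∑ c : Fin t → Bool, colWeight p c * ((heads c : ℝ) - t * p) ^ 2 = t * (p * (1 - p)) := by
  set d : Bool → ℝ := fun b => (if b then 1 else 0) - p
  have hdev (c : Fin t → Bool) : (heads c : ℝ) - t * p = ∑ s, d (c s) := by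
    simp [d, heads, sum_sub_distrib]
  -- independent, centred flips: only the diagonal terms `s = s'` survive
  have hcov (s s' : Fin t) : ∑ c : Fin t → Bool, colWeight p c * (d (c s) * d (c s')) =
      if s = s' then p * (1 - p) else 0 := by
    have hprod (c : Fin t → Bool) : d (c s) * d (c s') =
        ∏ u, (if u = s then d (c u) else 1) * (if u = s' then d (c u) else 1) := by
      rw [prod_mul_distrib, Fintype.prod_ite_eq', Fintype.prod_ite_eq']
    simp_rw [hprod]
    rw [sum_colWeight_mul_prod p fun u b =>
      (if u = s then d b else 1) * (if u = s' then d b else 1)]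
    split_ifs with hss
    · subst hss
      rw [prod_eq_single s (fun u _ hu => by simp [hu]) (by simp)]
      simp [d]; ring
    · exact prod_eq_zero (mem_univ s) (by simp [hss, d]; ring)
  calc ∑ c : Fin t → Bool, colWeight p c * ((heads c : ℝ) - t * p) ^ 2
      = ∑ s, ∑ s', ∑ c : Fin t → Bool, colWeight p c * (d (c s) * d (c s')) := by
        simp_rw [hdev, sq, sum_mul_sum, mul_sum]
        rw [sum_comm]; exact sum_congr rfl fun _ _ => sum_comm
    _ = t * (p * (1 - p)) := by simp [hcov]

lemma colProb_nonneg {p : ℝ} (h0 : 0 ≤ p) (h1 : p ≤ 1) (D : Set (Fin t → Bool)) :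
    0 ≤ colProb p D :=
  sum_nonneg fun c _ => Set.indicator_nonneg (fun c _ => colWeight_nonneg h0 h1 c) c

lemma colProb_le_one {p : ℝ} (h0 : 0 ≤ p) (h1 : p ≤ 1) (D : Set (Fin t → Bool)) :
    colProb p D ≤ 1 :=
  (sum_le_sum fun c _ => Set.indicator_le_self' (fun c _ => colWeight_nonneg h0 h1 c) c).trans
    (sum_colWeight p).le

lemma colProb_le_of_forall_colWeight_le {p w : ℝ} {D : Set (Fin t → Bool)} (hw : 0 ≤ w)
    (hD : ∀ c ∈ D, colWeight p c ≤ w) : colProb p D ≤ 2 ^ t * w := by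
  calc colProb p D ≤ ∑ _c : Fin t → Bool, w := sum_le_sum fun c _ => by
        by_cases hc : c ∈ D
        · simpa [hc] using hD c hc
        · simpa [hc] using hw
    _ = 2 ^ t * w := by simp

lemma colProb_le_of_le_heads {p : ℝ} (h0 : 0 ≤ p) (h1 : p ≤ 1) {h : ℕ}
    {D : Set (Fin t → Bool)} (hD : ∀ c ∈ D, h ≤ heads c) : colProb p D ≤ 2 ^ t * p ^ h := by
  refine colProb_le_of_forall_colWeight_le (by positivity) fun c hc => ?_
  rw [colWeight_eq]
  calc p ^ heads c * (1 - p) ^ (t - heads c) ≤ p ^ heads c * 1 := by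
        gcongr; exact pow_le_one₀ (by linarith) (by linarith)
    _ ≤ p ^ h := by rw [mul_one]; exact pow_le_pow_of_le_one h0 h1 (hD c hc)

lemma colProb_le_of_le_tails {p : ℝ} (h0 : 0 ≤ p) (h1 : p ≤ 1) {h : ℕ}
    {D : Set (Fin t → Bool)} (hD : ∀ c ∈ D, h ≤ t - heads c) :
    colProb p D ≤ 2 ^ t * (1 - p) ^ h := by
  refine colProb_le_of_forall_colWeight_le (pow_nonneg (by linarith) _) fun c hc => ?_
  rw [colWeight_eq]
  calc p ^ heads c * (1 - p) ^ (t - heads c) ≤ 1 * (1 - p) ^ (t - heads c) :=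
        mul_le_mul_of_nonneg_right (pow_le_one₀ h0 h1) (pow_nonneg (by linarith) _)
    _ ≤ (1 - p) ^ h := by
        rw [one_mul]; exact pow_le_pow_of_le_one (by linarith) (by linarith) (hD c hc)

lemma colProb_le_of_le_abs_freq_sub {p η : ℝ} (h0 : 0 ≤ p) (h1 : p ≤ 1) (hη : 0 < η)
    (ht : 1 ≤ t) {D : Set (Fin t → Bool)} (hD : ∀ c ∈ D, η ≤ |freq c - p|) :
    colProb p D ≤ (4 * t * η ^ 2)⁻¹ := by
  have htpos : (0 : ℝ) < t := by exact_mod_cast ht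
  have hdev (c : Fin t → Bool) (hc : c ∈ D) : (t * η) ^ 2 ≤ ((heads c : ℝ) - t * p) ^ 2 := by
    have : (heads c : ℝ) - t * p = t * (freq c - p) := by
      rw [freq]; field_simp
    calc (t * η) ^ 2 ≤ (t * |freq c - p|) ^ 2 :=
          pow_le_pow_left₀ (by positivity) (mul_le_mul_of_nonneg_left (hD c hc) htpos.le) 2
      _ = ((heads c : ℝ) - t * p) ^ 2 := by rw [this, mul_pow, mul_pow, sq_abs]
  have hmain : (t * η) ^ 2 * colProb p D ≤ t / 4 :=
    calc (t * η) ^ 2 * colProb p D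
        = ∑ c, D.indicator (fun c => colWeight p c * (t * η) ^ 2) c := by
          rw [colProb, mul_sum]
          refine sum_congr rfl fun c _ => ?_
          by_cases hc : c ∈ D <;> simp [hc, mul_comm]
      _ ≤ ∑ c : Fin t → Bool, colWeight p c * ((heads c : ℝ) - t * p) ^ 2 :=
          sum_le_sum fun c _ => by
            by_cases hc : c ∈ D
            · simpa [hc] using mul_le_mul_of_nonneg_left (hdev c hc) (colWeight_nonneg h0 h1 c)
            · simpa [hc] using mul_nonneg (colWeight_nonneg h0 h1 c) (sq_nonneg _)
      _ = t * (p * (1 - p)) := sum_colWeight_mul_heads_sub_sq p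
      _ ≤ t / 4 := by nlinarith [sq_nonneg (p - 1 / 2)]
  calc colProb p D ≤ t / 4 / (t * η) ^ 2 := by rw [le_div_iff₀ (by positivity)]; linarith
    _ = (4 * t * η ^ 2)⁻¹ := by field_simp

end Column

section Coins

variable {n t : ℕ}

def col (i : Fin n) (x : Fin t → Fin n → Bool) : Fin t → Bool := fun s => x s i

lemma empAvg_eq_freq (x : Fin t → Fin n → Bool) (i : Fin n) :
    empAvg t x i = freq (col i x) := by
  rw [empAvg, freq, heads]; push_cast; rfl

lemma empAvg_mem_cube (x : Fin t → Fin n → Bool) : empAvg t x ∈ cube n := fun i => by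
  simpa [empAvg_eq_freq] using freq_mem_Icc (col i x)

lemma flipWeight_eq_prod_colWeight (p : Fin n → ℝ) (x : Fin t → Fin n → Bool) :
    flipWeight p x = ∏ i, colWeight (p i) (col i x) :=
  prod_comm

lemma flipWeight_nonneg {p : Fin n → ℝ} (hp : p ∈ cube n) (x : Fin t → Fin n → Bool) :
    0 ≤ flipWeight p x := by
  rw [flipWeight_eq_prod_colWeight]
  exact prod_nonneg fun i _ => colWeight_nonneg (hp i).1 (hp i).2 _

lemma coinProb_mono {p : Fin n → ℝ} (hp : p ∈ cube n) {E E' : Set (Fin t → Fin n → Bool)}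
    (h : E ⊆ E') : coinProb t p E ≤ coinProb t p E' :=
  sum_le_sum fun x _ => Set.indicator_le_indicator_of_subset h (fun x => flipWeight_nonneg hp x) x

lemma coinProb_le_sum {ι : Type*} [Fintype ι] {p : Fin n → ℝ} (hp : p ∈ cube n)
    {E : Set (Fin t → Fin n → Bool)} {F : ι → Set (Fin t → Fin n → Bool)}
    (hE : E ⊆ ⋃ i, F i) : coinProb t p E ≤ ∑ i, coinProb t p (F i) := by
  simp only [coinProb]
  rw [sum_comm]
  refine sum_le_sum fun x _ => ?_
  by_cases hx : x ∈ E
  · obtain ⟨i, hi⟩ := Set.mem_iUnion.1 (hE hx)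
    calc E.indicator (flipWeight p) x = (F i).indicator (flipWeight p) x := by simp [hx, hi]
      _ ≤ ∑ j, (F j).indicator (flipWeight p) x :=
        single_le_sum (f := fun j => (F j).indicator (flipWeight p) x)
          (fun j _ => Set.indicator_nonneg (fun x _ => flipWeight_nonneg hp x) x) (mem_univ i)
  · simpa [hx] using sum_nonneg fun j _ =>
      Set.indicator_nonneg (fun x _ => flipWeight_nonneg hp x) (s := F j) x

lemma coinProb_eq_sum_fiber {ι : Type*} [Fintype ι] [DecidableEq ι] (p : Fin n → ℝ)
    (E : Set (Fin t → Fin n → Bool)) (g : (Fin t → Fin n → Bool) → ι) :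
    coinProb t p E = ∑ j, coinProb t p (E ∩ {x | g x = j}) := by
  simp only [coinProb]
  rw [sum_comm]
  refine sum_congr rfl fun x _ => ?_
  have hfib (j : ι) : (E ∩ {x | g x = j}).indicator (flipWeight p) x =
      if g x = j then E.indicator (flipWeight p) x else 0 := by
    classical
    rw [Set.indicator_apply, Set.indicator_apply]
    by_cases h : g x = j <;> by_cases hx : x ∈ E <;> simp [h, hx]
  simp [hfib]

lemma coinProb_pi (p : Fin n → ℝ) (D : Fin n → Set (Fin t → Bool)) :
    coinProb t p {x | ∀ i, col i x ∈ D i} = ∏ i, colProb (p i) (D i) := by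
  have hind (x : Fin t → Fin n → Bool) : {x | ∀ i, col i x ∈ D i}.indicator (flipWeight p) x =
      ∏ i, (D i).indicator (colWeight (p i)) (col i x) := by
    by_cases hx : ∀ i, col i x ∈ D i
    · simp [hx, flipWeight_eq_prod_colWeight]
    · obtain ⟨i, hi⟩ := not_forall.1 hx
      simp only [Set.indicator_of_notMem (show x ∉ {x | ∀ i, col i x ∈ D i} from hx)]
      exact (prod_eq_zero (mem_univ i) (Set.indicator_of_notMem hi _)).symm
  simp_rw [coinProb, hind, colProb, Fintype.prod_sum]
  exact Fintype.sum_equiv (Equiv.piComm fun _ _ => Bool) _ _ fun x => rfl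

lemma coinProb_col (p : Fin n → ℝ) (i : Fin n) (D : Set (Fin t → Bool)) :
    coinProb t p {x | col i x ∈ D} = colProb (p i) D := by
  classical
  have hev : {x : Fin t → Fin n → Bool | col i x ∈ D} =
      {x | ∀ j, col j x ∈ (if j = i then D else Set.univ)} := by
    ext x
    exact ⟨fun hx j => by split_ifs with h <;> simp_all, fun hx => by simpa using hx i⟩
  rw [hev, coinProb_pi, prod_eq_single i (fun j _ hj => by simp [hj, colProb, sum_colWeight])
    (by simp)]
  simp

end Coins

lemma two_pow_mul_pow_le {p r β : ℝ} {t h m : ℕ} (hp : 0 ≤ p) (hpr : p ≤ r) (hr0 : 0 < r)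
    (hβ : 0 < β) (hr : r ≤ (1 / 4) ^ ⌈β⁻¹⌉₊) (hmh : m ≤ h) (hth : β * t ≤ h) (ht : 1 ≤ t) :
    2 ^ t * p ^ h ≤ (p / r) ^ m / t := by
  set N := ⌈β⁻¹⌉₊
  have htN : t ≤ N * h := by
    have : (t : ℝ) ≤ N * h := calc
      (t : ℝ) = β⁻¹ * (β * t) := by field_simp
      _ ≤ N * h := mul_le_mul (Nat.le_ceil _) hth (by positivity) (by positivity)
    exact_mod_cast this
  have hrh : r ^ h ≤ (1 / 4) ^ t := calc
    r ^ h ≤ ((1 / 4) ^ N) ^ h := pow_le_pow_left₀ hr0.le hr h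
    _ = (1 / 4) ^ (N * h) := (pow_mul _ _ _).symm
    _ ≤ (1 / 4) ^ t := pow_le_pow_of_le_one (by norm_num) (by norm_num) htN
  have hph : p ^ h * r ^ m ≤ p ^ m * r ^ h := by
    obtain ⟨k, rfl⟩ := Nat.exists_eq_add_of_le hmh
    have := pow_le_pow_left₀ hp hpr k
    rw [pow_add, pow_add, mul_right_comm, mul_assoc _ (r ^ m)]
    gcongr
  have hhalf : ((1 : ℝ) / 2) ^ t ≤ 1 / t := by
    rw [one_div_pow]
    exact one_div_le_one_div_of_le (by positivity) (by exact_mod_cast Nat.lt_two_pow_self.le)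
  calc 2 ^ t * p ^ h = 2 ^ t * (p ^ h * r ^ m) / r ^ m := by field_simp
    _ ≤ 2 ^ t * (p ^ m * r ^ h) / r ^ m := by gcongr
    _ = (p / r) ^ m * (2 ^ t * r ^ h) := by rw [div_pow]; field_simp
    _ ≤ (p / r) ^ m * (2 ^ t * (1 / 4) ^ t) := by gcongr
    _ = (p / r) ^ m * (1 / 2) ^ t := by rw [← mul_pow]; norm_num
    _ ≤ (p / r) ^ m * (1 / t) := by gcongr
    _ = (p / r) ^ m / t := by ring

section Tails

variable {t m : ℕ} {p r β : ℝ}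

lemma colProb_le_of_le_freq (hp0 : 0 ≤ p) (hp1 : p ≤ 1) (hpr : p ≤ r) (hr0 : 0 < r)
    (hβ : 0 < β) (hr : r ≤ (1 / 4) ^ ⌈β⁻¹⌉₊) (hmt : m ≤ β * t) (ht : 1 ≤ t)
    {D : Set (Fin t → Bool)} (hD : ∀ c ∈ D, β ≤ freq c) : colProb p D ≤ (p / r) ^ m / t := by
  have htpos : (0 : ℝ) < t := by exact_mod_cast ht
  have hheads (c : Fin t → Bool) (hc : c ∈ D) : ⌈β * t⌉₊ ≤ heads c := by
    have := hD c hc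
    rw [freq, le_div_iff₀ htpos] at this
    exact Nat.ceil_le.2 this
  exact (colProb_le_of_le_heads hp0 hp1 hheads).trans <| two_pow_mul_pow_le hp0 hpr hr0 hβ hr
    (Nat.cast_le.1 (hmt.trans (Nat.le_ceil _))) (Nat.le_ceil _) ht

lemma colProb_le_of_freq_le (hp0 : 0 ≤ p) (hp1 : p ≤ 1) (hpr : 1 - p ≤ r) (hr0 : 0 < r)
    (hβ : 0 < β) (hr : r ≤ (1 / 4) ^ ⌈β⁻¹⌉₊) (hmt : m ≤ β * t) (ht : 1 ≤ t)
    {D : Set (Fin t → Bool)} (hD : ∀ c ∈ D, freq c ≤ 1 - β) :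
    colProb p D ≤ ((1 - p) / r) ^ m / t := by
  have htpos : (0 : ℝ) < t := by exact_mod_cast ht
  have htails (c : Fin t → Bool) (hc : c ∈ D) : ⌈β * t⌉₊ ≤ t - heads c := by
    have := hD c hc
    rw [freq, div_le_iff₀ htpos] at this
    refine Nat.ceil_le.2 ?_
    rw [Nat.cast_sub (heads_le c)]
    linarith
  exact (colProb_le_of_le_tails hp0 hp1 htails).trans <|
    two_pow_mul_pow_le (by linarith) hpr hr0 hβ hr
      (Nat.cast_le.1 (hmt.trans (Nat.le_ceil _))) (Nat.le_ceil _) ht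

end Tails

/-- `zero`, `inner` and `one` correspond to the index sets `A`, `S` and `B` of a face
`F_{A,S,B}`. -/
inductive Side
  | zero | inner | one
  deriving DecidableEq

namespace Side

instance : Fintype Side := Fintype.ofList [zero, inner, one] fun σ => by cases σ <;> simp

/-- For `q ∈ [0,1]`, `classify 0 q` is the side of `q` itself. -/
noncomputable def classify (β v : ℝ) : Side :=
  if v ≤ β then zero else if 1 - β ≤ v then one else inner

def factor : Side → ℝ → ℝ
  | zero, p => 1 - p
  | inner, p => p * (1 - p)
  | one, p => p

def snap : Side → ℝ → ℝ
  | zero, _ => 0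
  | inner, v => v
  | one, _ => 1

def event {t : ℕ} (β : ℝ) (σ : Side) : Set (Fin t → Bool) := {c | classify β (freq c) = σ}

variable {β v : ℝ}

lemma lt_of_classify_ne_zero (h : classify β v ≠ zero) : β < v := by
  by_contra hv
  exact h (if_pos (not_lt.1 hv))

lemma lt_of_classify_ne_one (hβ : β < 1 / 2) (h : classify β v ≠ one) : v < 1 - β := by
  unfold classify at h
  split_ifs at h with h0 h1
  · linarith
  · exact absurd rfl h
  · exact lt_of_not_ge h1

lemma le_of_classify_eq_zero (h : classify β v = zero) : v ≤ β := by
  unfold classify at h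
  split_ifs at h with h0
  exact h0

lemma le_of_classify_eq_one (h : classify β v = one) : 1 - β ≤ v := by
  unfold classify at h
  split_ifs at h with h0 h1
  exact h1

lemma factor_nonneg (σ : Side) {p : ℝ} (hp0 : 0 ≤ p) (hp1 : p ≤ 1) : 0 ≤ σ.factor p := by
  cases σ <;> simp only [factor] <;> nlinarith

end Side

/-- `r ≤ β ^ 2` lets `2 / r` absorb the Chebyshev constant `(16 β ^ 2)⁻¹`, and
`r ≤ 4 ^ (-⌈β⁻¹⌉)` makes the tail bound `2 ^ t * r ^ (β t)` at most `2 ^ (-t)`. -/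
structure Scales (β r : ℝ) : Prop where
  β_pos : 0 < β
  β_le : β ≤ 1 / 8
  r_pos : 0 < r
  r_le_sq : r ≤ β ^ 2
  r_le_pow : r ≤ (1 / 4) ^ ⌈β⁻¹⌉₊

lemma two_div_mul_pow_le {x Φ r : ℝ} (m : ℕ) (hx : 0 ≤ x) (hxΦ : x ≤ 2 * Φ) (hr : 0 < r) :
    2 / r * (x / r) ^ m ≤ (2 / r) ^ (m + 1) * Φ ^ m :=
  calc 2 / r * (x / r) ^ m ≤ 2 / r * (2 * Φ / r) ^ m := by gcongr
    _ = (2 / r) ^ (m + 1) * Φ ^ m := by rw [pow_succ, div_pow, div_pow, mul_pow]; ring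

namespace Scales

variable {β r p q : ℝ}

lemma r_le (S : Scales β r) : r ≤ β / 8 := by nlinarith [S.r_le_sq, S.β_pos, S.β_le]

lemma one_le_two_div (S : Scales β r) : 1 ≤ 2 / r := by
  rw [le_div_iff₀ S.r_pos]; linarith [S.r_le, S.β_le]

lemma inv_le (S : Scales β r) (t : ℕ) :
    (4 * t * (2 * β) ^ 2)⁻¹ ≤ 2 / r / t := by
  rw [mul_comm 4, mul_assoc, mul_inv, ← div_eq_inv_mul]
  gcongr
  rw [le_div_iff₀ S.r_pos, inv_mul_le_iff₀ (by nlinarith [S.β_pos])]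
  nlinarith [S.r_le_sq]

lemma half_le_factor_classify (S : Scales β r)
    (hq : q = 0 ∨ q = 1 ∨ 4 * β ≤ q ∧ q ≤ 1 - 4 * β) (hpq : |p - q| < r) :
    r / 2 ≤ (Side.classify 0 q).factor p := by
  have := S.r_le; have := S.β_le; have := S.r_pos; have := S.r_le_sq
  rw [abs_lt] at hpq
  rcases hq with rfl | rfl | ⟨hq0, hq1⟩
  · simp only [Side.classify, le_refl, if_true, Side.factor]; linarith
  · norm_num [Side.classify, Side.factor]; linarith
  · have h3 : 3 * β ≤ p := by linarith
    have h3' : 3 * β ≤ 1 - p := by linarith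
    rw [Side.classify, if_neg (by linarith), if_neg (by linarith), Side.factor]
    nlinarith [mul_le_mul h3 h3' (by linarith) (by linarith)]

lemma div_pow_div_le (S : Scales β r) {x Φ : ℝ} (hx : 0 ≤ x) (hxΦ : x ≤ 2 * Φ) (m t : ℕ) :
    (x / r) ^ m / t ≤ (2 / r) ^ (m + 1) * Φ ^ m / t := by
  gcongr
  exact (le_mul_of_one_le_left (pow_nonneg (div_nonneg hx S.r_pos.le) m) S.one_le_two_div).trans
    (two_div_mul_pow_le m hx hxΦ S.r_pos)

lemma colProb_event_le_of_ne_zero (S : Scales β r) (hp0 : 0 ≤ p) (hpr : p < r) {σ : Side}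
    (hσ : σ ≠ .zero) {t m : ℕ} (hmt : m ≤ β * t) (ht : 1 ≤ t) :
    colProb p (σ.event β : Set (Fin t → Bool)) ≤ (2 / r) ^ (m + 1) * σ.factor p ^ m / t := by
  have hp : p ≤ 1 / 8 := by linarith [S.r_le, S.β_le]
  have hD (c : Fin t → Bool) (hc : c ∈ σ.event β) : β ≤ freq c :=
    (Side.lt_of_classify_ne_zero ((show Side.classify β (freq c) = σ from hc) ▸ hσ)).le
  refine (colProb_le_of_le_freq hp0 (by linarith) hpr.le S.r_pos S.β_pos S.r_le_pow hmt ht hD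
    ).trans (S.div_pow_div_le hp0 ?_ m t)
  cases σ <;> simp only [Side.factor] <;> first | exact absurd rfl hσ | nlinarith

lemma colProb_event_le_of_ne_one (S : Scales β r) (hp1 : p ≤ 1) (hpr : 1 - p < r) {σ : Side}
    (hσ : σ ≠ .one) {t m : ℕ} (hmt : m ≤ β * t) (ht : 1 ≤ t) :
    colProb p (σ.event β : Set (Fin t → Bool)) ≤ (2 / r) ^ (m + 1) * σ.factor p ^ m / t := by
  have hp : 7 / 8 ≤ p := by linarith [S.r_le, S.β_le]
  have hD (c : Fin t → Bool) (hc : c ∈ σ.event β) : freq c ≤ 1 - β :=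
    (Side.lt_of_classify_ne_one (by linarith [S.β_le])
      ((show Side.classify β (freq c) = σ from hc) ▸ hσ)).le
  refine (colProb_le_of_freq_le (by linarith) hp1 hpr.le S.r_pos S.β_pos S.r_le_pow hmt ht hD
    ).trans (S.div_pow_div_le (by linarith) ?_ m t)
  cases σ <;> simp only [Side.factor] <;> first | exact absurd rfl hσ | nlinarith

lemma colProb_event_le_of_ne_inner (S : Scales β r) (hp0 : 3 * β ≤ p) (hp1 : p ≤ 1 - 3 * β)
    {σ : Side} (hσ : σ ≠ .inner) {t m : ℕ} (ht : 1 ≤ t) :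
    colProb p (σ.event β : Set (Fin t → Bool)) ≤ (2 / r) ^ (m + 1) * σ.factor p ^ m / t := by
  have hβ := S.β_pos
  have hD (c : Fin t → Bool) (hc : c ∈ σ.event β) : 2 * β ≤ |freq c - p| := by
    have hc : Side.classify β (freq c) = σ := hc
    cases σ
    · have := Side.le_of_classify_eq_zero hc
      exact le_abs.2 (Or.inr (by linarith))
    · exact absurd rfl hσ
    · have := Side.le_of_classify_eq_one hc
      exact le_abs.2 (Or.inl (by linarith))
  calc colProb p (σ.event β) ≤ (4 * t * (2 * β) ^ 2)⁻¹ :=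
        colProb_le_of_le_abs_freq_sub (by linarith) (by linarith) (by positivity) ht hD
    _ ≤ 2 / r / t := S.inv_le t
    _ = 2 / r * (r / r) ^ m / t := by rw [div_self S.r_pos.ne', one_pow, mul_one]
    _ ≤ _ := by
        refine div_le_div_of_nonneg_right (two_div_mul_pow_le m S.r_pos.le ?_ S.r_pos)
          (Nat.cast_nonneg _)
        have := S.r_le
        cases σ <;> simp only [Side.factor] <;> first | exact absurd rfl hσ | linarith

lemma colProb_event_le_of_ne (S : Scales β r)
    (hq : q = 0 ∨ q = 1 ∨ 4 * β ≤ q ∧ q ≤ 1 - 4 * β) (hp0 : 0 ≤ p) (hp1 : p ≤ 1)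
    (hpq : |p - q| < r) {σ : Side} (hσ : σ ≠ Side.classify 0 q) {t m : ℕ}
    (hmt : m ≤ β * t) (ht : 1 ≤ t) :
    colProb p (σ.event β : Set (Fin t → Bool)) ≤ (2 / r) ^ (m + 1) * σ.factor p ^ m / t := by
  rw [abs_lt] at hpq
  rcases hq with rfl | rfl | ⟨hq0, hq1⟩
  · exact S.colProb_event_le_of_ne_zero hp0 (by linarith) (by simpa [Side.classify] using hσ)
      hmt ht
  · exact S.colProb_event_le_of_ne_one hp1 (by linarith)
      (by simpa [Side.classify, show ¬(1 : ℝ) ≤ 0 by norm_num] using hσ) hmt ht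
  · have := S.r_le
    refine S.colProb_event_le_of_ne_inner (by linarith) (by linarith) ?_ ht
    rwa [Side.classify, if_neg (by linarith), if_neg (by linarith)] at hσ

lemma colProb_event_le (S : Scales β r)
    (hq : q = 0 ∨ q = 1 ∨ 4 * β ≤ q ∧ q ≤ 1 - 4 * β) (hp0 : 0 ≤ p) (hp1 : p ≤ 1)
    (hpq : |p - q| < r) (σ : Side) {t m : ℕ} (hmt : m ≤ β * t) (ht : 1 ≤ t) :
    colProb p (σ.event β : Set (Fin t → Bool)) ≤ (2 / r) ^ (m + 1) * σ.factor p ^ m := by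
  by_cases hσ : σ = Side.classify 0 q
  · calc colProb p (σ.event β) ≤ 1 := colProb_le_one hp0 hp1 _
      _ ≤ 2 / r * (r / r) ^ m := by
          rw [div_self S.r_pos.ne', one_pow, mul_one]; exact S.one_le_two_div
      _ ≤ _ := two_div_mul_pow_le m S.r_pos.le
          (by linarith [hσ ▸ S.half_le_factor_classify hq hpq]) S.r_pos
  · exact (S.colProb_event_le_of_ne hq hp0 hp1 hpq hσ hmt ht).trans
      (div_le_self (mul_nonneg (pow_nonneg (div_nonneg zero_le_two S.r_pos.le) _)
        (pow_nonneg (σ.factor_nonneg hp0 hp1) _)) (by exact_mod_cast ht))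

end Scales

section Faces

variable {n : ℕ}

noncomputable def sidePattern (β : ℝ) (y : Fin n → ℝ) : Fin n → Side :=
  fun i => Side.classify β (y i)

def sideSet (σ : Fin n → Side) (s : Side) : Finset (Fin n) := univ.filter (σ · = s)

def sideFace (σ : Fin n → Side) : Set (Fin n → ℝ) := face (sideSet σ .zero) (sideSet σ .one)

def snapTo (σ : Fin n → Side) (y : Fin n → ℝ) : Fin n → ℝ := fun i => (σ i).snap (y i)

lemma disjoint_sideSet_zero_one (σ : Fin n → Side) :
    Disjoint (sideSet σ .zero) (sideSet σ .one) :=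
  disjoint_filter.2 fun i _ h => by simp [h]

lemma facePoly_sideSet (σ : Fin n → Side) (p : Fin n → ℝ) :
    facePoly (sideSet σ .zero) (sideSet σ .one) p = ∏ i, (σ i).factor (p i) := by
  have hinner : (sideSet σ .zero ∪ sideSet σ .one)ᶜ = sideSet σ .inner := by
    ext i; cases h : σ i <;> simp [sideSet, h]
  rw [facePoly, hinner]
  simp only [sideSet, prod_filter, ← prod_mul_distrib]
  refine prod_congr rfl fun i _ => ?_
  cases σ i <;> simp [Side.factor]

lemma face_subset_cube (A B : Finset (Fin n)) : face A B ⊆ cube n := by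
  rintro z ⟨hA, hB, hS⟩ i
  by_cases hiA : i ∈ A
  · simp [hA i hiA]
  by_cases hiB : i ∈ B
  · simp [hB i hiB]
  have := hS i (by simp [hiA, hiB])
  constructor <;> linarith

lemma snapTo_mem_cube (σ : Fin n → Side) {y : Fin n → ℝ} (hy : y ∈ cube n) :
    snapTo σ y ∈ cube n := fun i => by
  simp only [snapTo]; cases σ i <;> simp [Side.snap, hy i]

lemma continuous_snapTo (σ : Fin n → Side) : Continuous (snapTo σ) :=
  continuous_pi fun i => by
    show Continuous fun y : Fin n → ℝ => (σ i).snap (y i)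
    cases σ i
    exacts [continuous_const, continuous_apply i, continuous_const]

/-- The open segment from a snapped point to the centre of the face lies in the face. -/
lemma snapTo_mem_closure_sideFace (σ : Fin n → Side) {y : Fin n → ℝ} (hy : y ∈ cube n) :
    snapTo σ y ∈ closure (sideFace σ) := by
  have hseg : openSegment ℝ (snapTo σ y) (snapTo σ fun _ => 1 / 2) ⊆ sideFace σ := by
    rintro z ⟨a, b, ha, hb, hab, rfl⟩
    refine ⟨fun i hi => ?_, fun i hi => ?_, fun i hi => ?_⟩
    · simp_all [sideSet, snapTo, Side.snap]
    · simp_all [sideSet, snapTo, Side.snap]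
    · have hσ : σ i = .inner := by
        cases h : σ i <;> simp_all [sideSet]
      have := hy i
      simp only [Pi.add_apply, Pi.smul_apply, smul_eq_mul, snapTo, hσ, Side.snap]
      constructor <;> nlinarith
  exact segment_subset_closure_openSegment (left_mem_segment ℝ _ _) |> closure_mono hseg

variable {f : (Fin n → ℝ) → ℝ}

lemma apply_snapTo_eq_zero (hcont : ContinuousOn f (cube n)) {σ : Fin n → Side}
    (hzero : ∀ z ∈ sideFace σ, f z = 0) {y : Fin n → ℝ} (hy : y ∈ cube n) :
    f (snapTo σ y) = 0 := by
  have hcw := (hcont _ (snapTo_mem_cube σ hy)).mono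
    (face_subset_cube (sideSet σ .zero) (sideSet σ .one))
  simpa using hcw.mem_closure (snapTo_mem_closure_sideFace σ hy)
    (t := {0}) fun z hz => hzero z hz

lemma dist_snapTo_sidePattern_le {β : ℝ} (hβ : 0 ≤ β) {y : Fin n → ℝ} (hy : y ∈ cube n) :
    dist y (snapTo (sidePattern β y) y) ≤ β := by
  refine (dist_pi_le_iff hβ).2 fun i => ?_
  have := hy i
  rw [Real.dist_eq]
  simp only [snapTo, sidePattern, Side.classify]
  split_ifs <;> simp only [Side.snap, abs_le] <;> constructor <;> linarith

lemma isCompact_cube : IsCompact (cube n) := by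
  convert isCompact_univ_pi fun _ : Fin n => isCompact_Icc (a := (0 : ℝ)) (b := 1)
  ext y; simp [cube, Pi.le_def, forall_and]

lemma isCompact_superlevel (hcont : ContinuousOn f (cube n)) (a : ℝ) :
    IsCompact {y | y ∈ cube n ∧ a ≤ f y} :=
  isCompact_cube.of_isClosed_subset
    (hcont.preimage_isClosed_of_isClosed isCompact_cube.isClosed isClosed_Ici)
    fun _ hy => hy.1

end Faces

section Scale

variable {n : ℕ} {f : (Fin n → ℝ) → ℝ} {q : Fin n → ℝ}

structure IsAdapted (f : (Fin n → ℝ) → ℝ) (q : Fin n → ℝ) (β : ℝ) : Prop where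
  anchored : ∀ i, q i = 0 ∨ q i = 1 ∨ 4 * β ≤ q i ∧ q i ≤ 1 - 4 * β
  separated : ∀ y ∈ cube n, 1 / 2 ≤ f y → 3 * β < dist y q
  avoids : ∀ σ : Fin n → Side, (∀ z ∈ sideFace σ, f z = 0) →
    ∀ y ∈ cube n, 1 / 2 ≤ f y → sidePattern β y ≠ σ

lemma eventually_anchored (hq : q ∈ cube n) :
    ∀ᶠ β in 𝓝[>] 0, ∀ i, q i = 0 ∨ q i = 1 ∨ 4 * β ≤ q i ∧ q i ≤ 1 - 4 * β := by
  refine eventually_all.2 fun i => ?_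
  rcases (hq i).1.eq_or_lt with h0 | h0
  · exact Eventually.of_forall fun _ => Or.inl h0.symm
  rcases (hq i).2.eq_or_lt with h1 | h1
  · exact Eventually.of_forall fun _ => Or.inr (Or.inl h1)
  have hpos : 0 < min (q i) (1 - q i) / 4 := by positivity
  filter_upwards [nhdsWithin_le_nhds (eventually_lt_nhds hpos)] with β hβ
  exact Or.inr (Or.inr ⟨by linarith [min_le_left (q i) (1 - q i)],
    by linarith [min_le_right (q i) (1 - q i)]⟩)

lemma eventually_separated (hcont : ContinuousOn f (cube n)) (hfq : f q < 1 / 2) :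
    ∀ᶠ β in 𝓝[>] 0, ∀ y ∈ cube n, 1 / 2 ≤ f y → 3 * β < dist y q := by
  obtain ⟨a, ha, hmin⟩ := (isCompact_superlevel hcont (1 / 2)).exists_forall_le'
    (f := fun y => dist y q) (continuous_id.dist continuous_const).continuousOn (a := 0)
    fun y hy => dist_pos.2 fun h => by rw [h] at hy; linarith [hy.2]
  filter_upwards [nhdsWithin_le_nhds (eventually_lt_nhds (div_pos ha three_pos))]
    with β hβ y hy hfy
  linarith [hmin y ⟨hy, hfy⟩]

/-- By continuity `f` vanishes on the closed face, so by compactness `{f ≥ 1/2}` keeps a positive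
distance from it. -/
lemma eventually_avoids (hcont : ContinuousOn f (cube n)) {σ : Fin n → Side}
    (hzero : ∀ z ∈ sideFace σ, f z = 0) :
    ∀ᶠ β in 𝓝[>] 0, ∀ y ∈ cube n, 1 / 2 ≤ f y → sidePattern β y ≠ σ := by
  obtain ⟨a, ha, hmin⟩ := (isCompact_superlevel hcont (1 / 2)).exists_forall_le'
    (f := fun y => dist y (snapTo σ y)) (continuous_id.dist (continuous_snapTo σ)).continuousOn
    (a := 0)
    fun y hy => dist_pos.2 fun h => by
      have := apply_snapTo_eq_zero hcont hzero hy.1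
      rw [← h] at this; linarith [hy.2]
  filter_upwards [self_mem_nhdsWithin, nhdsWithin_le_nhds (eventually_lt_nhds ha)]
    with β hβ hβa y hy hfy hpat
  have := dist_snapTo_sidePattern_le (le_of_lt hβ) hy
  rw [hpat] at this
  linarith [hmin y ⟨hy, hfy⟩]

lemma eventually_isAdapted (hcont : ContinuousOn f (cube n)) (hq : q ∈ cube n)
    (hfq : f q < 1 / 2) : ∀ᶠ β in 𝓝[>] 0, IsAdapted f q β := by
  have havoid : ∀ᶠ β in 𝓝[>] 0, ∀ σ : Fin n → Side, (∀ z ∈ sideFace σ, f z = 0) →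
      ∀ y ∈ cube n, 1 / 2 ≤ f y → sidePattern β y ≠ σ := by
    refine eventually_all.2 fun σ => ?_
    by_cases hzero : ∀ z ∈ sideFace σ, f z = 0
    · exact (eventually_avoids hcont hzero).mono fun _ h _ => h
    · exact Eventually.of_forall fun _ h => absurd h hzero
  filter_upwards [eventually_anchored hq, eventually_separated hcont hfq, havoid]
    with β h1 h2 h3
  exact ⟨h1, h2, h3⟩

lemma exists_isAdapted_scales (hcont : ContinuousOn f (cube n)) (hq : q ∈ cube n)
    (hfq : f q < 1 / 2) : ∃ β r, IsAdapted f q β ∧ Scales β r := by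
  obtain ⟨β, hA, hβ : 0 < β, hβ8⟩ := ((eventually_isAdapted hcont hq hfq).and
    (eventually_mem_nhdsWithin.and (nhdsWithin_le_nhds (eventually_le_nhds (by norm_num :
      (0 : ℝ) < 1 / 8))))).exists
  exact ⟨β, _, hA, hβ, hβ8, lt_min (by positivity) (by positivity), min_le_left _ _,
    min_le_right _ _⟩

end Scale

section Estimate

variable {n t m : ℕ} {f : (Fin n → ℝ) → ℝ} {q p : Fin n → ℝ} {β r : ℝ}

lemma setOf_sidePattern_eq (β : ℝ) (σ : Fin n → Side) :
    {x : Fin t → Fin n → Bool | sidePattern β (empAvg t x) = σ} =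
      {x | ∀ i, col i x ∈ (σ i).event β} := by
  ext x
  simp [funext_iff, sidePattern, empAvg_eq_freq, Side.event]

lemma coinProb_superlevel_le (hsep : ∀ y ∈ cube n, 1 / 2 ≤ f y → 3 * β < dist y q)
    (S : Scales β r) (hp : p ∈ cube n) (hpq : ∀ i, |p i - q i| < r) (ht : 1 ≤ t) :
    coinProb t p {x | 1 / 2 ≤ f (empAvg t x)} ≤ n * (4 * t * (2 * β) ^ 2)⁻¹ := by
  have hcover : {x : Fin t → Fin n → Bool | 1 / 2 ≤ f (empAvg t x)} ⊆
      ⋃ i, {x | col i x ∈ {c | 2 * β ≤ |freq c - p i|}} := by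
    intro x hx
    obtain ⟨i, hi⟩ : ∃ i, 3 * β < |empAvg t x i - q i| := by
      by_contra! h
      exact ((dist_pi_le_iff (by linarith [S.β_pos])).2 fun i => (Real.dist_eq _ _).trans_le (h i)
        ).not_gt (hsep _ (empAvg_mem_cube x) hx)
    refine Set.mem_iUnion.2 ⟨i, ?_⟩
    show 2 * β ≤ |freq (col i x) - p i|
    have := abs_sub_abs_le_abs_sub (empAvg t x i - q i) (p i - q i)
    rw [sub_sub_sub_cancel_right] at this
    rw [← empAvg_eq_freq]
    linarith [hpq i, S.r_le, S.β_pos]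
  calc _ ≤ ∑ i, coinProb t p {x | col i x ∈ {c | 2 * β ≤ |freq c - p i|}} :=
        coinProb_le_sum hp hcover
    _ ≤ ∑ _i : Fin n, (4 * t * (2 * β) ^ 2)⁻¹ := sum_le_sum fun i _ => by
        rw [coinProb_col]
        exact colProb_le_of_le_abs_freq_sub (hp i).1 (hp i).2 (by linarith [S.β_pos]) ht
          fun c hc => hc
    _ = _ := by simp

lemma coinProb_fiber_le_of_ne (S : Scales β r)
    (hq : ∀ i, q i = 0 ∨ q i = 1 ∨ 4 * β ≤ q i ∧ q i ≤ 1 - 4 * β) (hp : p ∈ cube n)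
    (hpq : ∀ i, |p i - q i| < r) {σ : Fin n → Side} (hσ : σ ≠ sidePattern 0 q)
    (hmt : m ≤ β * t) (ht : 1 ≤ t) :
    coinProb t p {x | sidePattern β (empAvg t x) = σ} ≤
      (2 / r) ^ ((m + 1) * n) * facePoly (sideSet σ .zero) (sideSet σ .one) p ^ m / t := by
  obtain ⟨i₀, hi₀⟩ := Function.ne_iff.1 hσ
  set X : Fin n → ℝ := fun i => (2 / r) ^ (m + 1) * (σ i).factor (p i) ^ m
  have hX0 (i : Fin n) : 0 ≤ X i :=
    mul_nonneg (pow_nonneg (div_nonneg zero_le_two S.r_pos.le) _)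
      (pow_nonneg ((σ i).factor_nonneg (hp i).1 (hp i).2) _)
  have hcol0 (i : Fin n) : 0 ≤ colProb (p i) ((σ i).event β : Set (Fin t → Bool)) :=
    colProb_nonneg (hp i).1 (hp i).2 _
  rw [setOf_sidePattern_eq, coinProb_pi, ← mul_prod_erase _ _ (mem_univ i₀)]
  calc _ ≤ X i₀ / t * ∏ i ∈ univ.erase i₀, X i :=
        mul_le_mul (S.colProb_event_le_of_ne (hq i₀) (hp i₀).1 (hp i₀).2 (hpq i₀) hi₀ hmt ht)
          (prod_le_prod (fun i _ => hcol0 i) fun i _ =>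
            S.colProb_event_le (hq i) (hp i).1 (hp i).2 (hpq i) _ hmt ht)
          (prod_nonneg fun i _ => hcol0 i) (div_nonneg (hX0 i₀) (Nat.cast_nonneg _))
    _ = (∏ i, X i) / t := by rw [div_mul_eq_mul_div, mul_prod_erase _ _ (mem_univ i₀)]
    _ = _ := by simp [X, prod_mul_distrib, prod_pow, facePoly_sideSet, pow_mul]

lemma pow_le_facePoly_sidePattern (S : Scales β r)
    (hq : ∀ i, q i = 0 ∨ q i = 1 ∨ 4 * β ≤ q i ∧ q i ≤ 1 - 4 * β) (hpq : ∀ i, |p i - q i| < r) :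
    (r / 2) ^ n ≤
      facePoly (sideSet (sidePattern 0 q) .zero) (sideSet (sidePattern 0 q) .one) p := by
  rw [facePoly_sideSet]
  calc (r / 2) ^ n = ∏ _i : Fin n, r / 2 := by rw [prod_const, card_univ, Fintype.card_fin]
    _ ≤ _ := prod_le_prod (fun _ _ => by linarith [S.r_pos]) fun i _ =>
        S.half_le_factor_classify (hq i) (hpq i)

end Estimate

section Main

variable {n m : ℕ} {f : (Fin n → ℝ) → ℝ} {q : Fin n → ℝ} {β r c : ℝ}

lemma coinProb_superlevel_inter_fiber_le
    (hpoly : ∀ A B : Finset (Fin n), Disjoint A B → (¬ ∀ z ∈ face A B, f z = 0) →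
      ∀ p ∈ cube n, c * facePoly A B p ^ m ≤ f p) (hc : 0 < c)
    (hA : IsAdapted f q β) (S : Scales β r) {p : Fin n → ℝ} (hp : p ∈ cube n) (hfp : 0 ≤ f p)
    (hpq : ∀ i, |p i - q i| < r) {t : ℕ} (hmt : m ≤ β * t) (ht : 1 ≤ t) (σ : Fin n → Side) :
    coinProb t p ({x | 1 / 2 ≤ f (empAvg t x)} ∩ {x | sidePattern β (empAvg t x) = σ}) ≤
      ((2 / r) ^ ((m + 1) * n) + n * (2 / r) / (r / 2) ^ (n * m)) / c * f p / t := by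
  have hr := S.r_pos
  by_cases hzero : ∀ z ∈ sideFace σ, f z = 0
  · have hempty : {x : Fin t → Fin n → Bool | 1 / 2 ≤ f (empAvg t x)} ∩
        {x | sidePattern β (empAvg t x) = σ} = ∅ :=
      Set.eq_empty_of_forall_notMem fun x ⟨hx, hσx⟩ =>
        hA.avoids σ hzero _ (empAvg_mem_cube x) hx hσx
    rw [hempty]
    simp only [coinProb, Set.indicator_empty, sum_const_zero]
    positivity
  have hf := hpoly _ _ (disjoint_sideSet_zero_one σ) hzero p hp
  by_cases hσ : σ = sidePattern 0 q
  · subst hσ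
    have hfloor : c * (r / 2) ^ (n * m) ≤ f p :=
      calc c * (r / 2) ^ (n * m) = c * ((r / 2) ^ n) ^ m := by rw [pow_mul]
        _ ≤ f p := le_trans (by gcongr; exact pow_le_facePoly_sidePattern S hA.anchored hpq) hf
    calc _ ≤ coinProb t p {x | 1 / 2 ≤ f (empAvg t x)} := coinProb_mono hp Set.inter_subset_left
      _ ≤ n * (2 / r / t) := (coinProb_superlevel_le hA.separated S hp hpq ht).trans
          (by gcongr; exact S.inv_le t)
      _ ≤ n * (2 / r / t) * (f p / (c * (r / 2) ^ (n * m))) :=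
          le_mul_of_one_le_right (by positivity) ((one_le_div (by positivity)).2 hfloor)
      _ = n * (2 / r) / (r / 2) ^ (n * m) / c * f p / t := by ring
      _ ≤ _ := by gcongr; exact le_add_of_nonneg_left (by positivity)
  · calc _ ≤ coinProb t p {x | sidePattern β (empAvg t x) = σ} :=
          coinProb_mono hp Set.inter_subset_right
      _ ≤ (2 / r) ^ ((m + 1) * n) * facePoly (sideSet σ .zero) (sideSet σ .one) p ^ m / t :=
          coinProb_fiber_le_of_ne S hA.anchored hp hpq hσ hmt ht
      _ ≤ (2 / r) ^ ((m + 1) * n) * (f p / c) / t := by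
          gcongr; rw [le_div_iff₀ hc]; linarith
      _ = (2 / r) ^ ((m + 1) * n) / c * f p / t := by ring
      _ ≤ _ := by gcongr; exact le_add_of_nonneg_right (by positivity)

lemma exists_coinProb_superlevel_le
    (hpoly : ∀ A B : Finset (Fin n), Disjoint A B → (¬ ∀ z ∈ face A B, f z = 0) →
      ∀ p ∈ cube n, c * facePoly A B p ^ m ≤ f p) (hc : 0 < c)
    (hA : IsAdapted f q β) (S : Scales β r) :
    ∃ C, ∀ p ∈ cube n, 0 ≤ f p → (∀ i, |p i - q i| < r) → ∀ t : ℕ, 1 ≤ t → m ≤ β * t →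
      coinProb t p {x | 1 / 2 ≤ f (empAvg t x)} ≤ C * f p / t := by
  set C₀ := ((2 / r) ^ ((m + 1) * n) + n * (2 / r) / (r / 2) ^ (n * m)) / c
  refine ⟨Fintype.card (Fin n → Side) * C₀, fun p hp hfp hpq t ht hmt => ?_⟩
  rw [coinProb_eq_sum_fiber p _ fun x => sidePattern β (empAvg t x)]
  calc _ ≤ ∑ _σ : Fin n → Side, C₀ * f p / t :=
        sum_le_sum fun σ _ => coinProb_superlevel_inter_fiber_le hpoly hc hA S hp hfp hpq hmt ht σ
    _ = _ := by rw [sum_const, card_univ, nsmul_eq_mul]; ring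

end Main

theorem stmt2 {n : ℕ} (f : (Fin n → ℝ) → ℝ)
    (hrange : ∀ p ∈ cube n, f p ∈ Set.Icc (0 : ℝ) 1)
    (hcont : ContinuousOn f (cube n))
    (hpb : PolyBounded f)
    (L : Set (Fin n → ℝ)) (hL : L = {p ∈ cube n | f p ≤ 3 / 8}) :
    ∀ q ∈ L, ∃ r : ℝ, 0 < r ∧ ∃ tq : ℕ, ∀ p ∈ L, ‖p - q‖ < r →
      ∀ t : ℕ, tq ≤ t →
        (1 / 8) * f p ≤
          f p - (1 / 4) * coinProb t p {x | 1 / 2 ≤ f (empAvg t x)} := by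
  obtain ⟨m, c, hc, hpoly⟩ := hpb
  subst hL
  rintro q ⟨hq, hfq⟩
  obtain ⟨β, r, hA, S⟩ := exists_isAdapted_scales hcont hq (by linarith)
  obtain ⟨C, hC⟩ := exists_coinProb_superlevel_le hpoly hc hA S
  obtain ⟨tq, htq⟩ := eventually_atTop.1 ((eventually_ge_atTop 1).and
    (((tendsto_natCast_atTop_atTop.const_mul_atTop S.β_pos).eventually_ge_atTop (m : ℝ)).and
      (tendsto_natCast_atTop_atTop.eventually_ge_atTop C)))
  refine ⟨r, S.r_pos, tq, fun p ⟨hp, _⟩ hpq t ht => ?_⟩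
  obtain ⟨ht1, hmt, hCt⟩ := htq t ht
  have hfp := (hrange p hp).1
  have hprob := hC p hp hfp (fun i => by simpa using (pi_norm_lt_iff S.r_pos).1 hpq i) t ht1 hmt
  have : C * f p / t ≤ f p := by
    rw [div_le_iff₀ (by positivity)]; nlinarith
  linarith
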